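/- arXiv:1909.05103 — 4 statements merged into one kernel-verified Lean document; each statement's English description precedes it below -/
import Mathlib

section
/- Let x₀ = I + t^{λ_p − λ_{q+1} − N} E_{p,q+1} (a matrix over 𝒪 since λ_p − λ_{q+1} ≥ N). Then there exist matrices g, h ∈ GL_{n+1}(𝒪) such that, as matrices over K, t^{−λ} · x₀ · t^{λ+μ−Nβ∨} = g · t^{μ} · h. (This says the relative position of the lattices [λ] and x₀[λ+μ−Nβ∨] in the affine Grassmannian of PGL_{n+1} equals μ.) -/
open Matrix

noncomputable section

/-- The ring `𝒪 = ℂ[[t]]` of formal power series. -/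
abbrev OO : Type := PowerSeries ℂ

/-- The field `K = ℂ((t))` of formal Laurent series. -/
abbrev KK : Type := LaurentSeries ℂ

/-- `t^k ∈ K` for an integer `k`. -/
def tz (k : ℤ) : KK := HahnSeries.single k 1

/-- The inclusion `𝒪 → K`. -/
def coeO : OO →+* KK := HahnSeries.ofPowerSeries ℤ ℂ

/-- The `GL`-coordinates of the coroot `β∨ = e_p − e_{q+1}` (indices `0`-based). -/
def bcov (p q : ℕ) (i : ℕ) : ℤ := (if i = p then 1 else 0) - (if i = q + 1 then 1 else 0)

/-!
The `λ`'s cancel: `t^{-λ} x₀ t^{λ+μ-Nβ∨} = t^{μ-Nβ∨} + t^{μ_{q+1}} E_{p,q+1}`, which agrees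
with `t^μ` outside the `{p, q+1}` block, where it is
`[[t^{μ_p-N}, t^{μ_{q+1}}], [0, t^{μ_{q+1}+N}]]`.
With `w = x_β(1) x_{-β}(-1) x_β(1)` the Weyl element of `β`, a direct computation writes this
matrix as `x_{-β}(t^N) · w · t^μ · x_{-β}(t^{μ_p-μ_{q+1}-N})`, and the right factor has entries
in `𝒪` because `μ_p - μ_{q+1} ≥ N`.
-/

namespace Matrix

variable {ι R : Type*} [Fintype ι] [DecidableEq ι] [CommRing R]

def weylElement (P Q : ι) : Matrix ι ι R :=
  transvection P Q 1 * transvection Q P (-1) * transvection P Q 1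

lemma det_weylElement {P Q : ι} (hPQ : P ≠ Q) : (weylElement P Q : Matrix ι ι R).det = 1 := by
  simp [weylElement, det_transvection_of_ne _ _ hPQ, det_transvection_of_ne _ _ hPQ.symm]

omit [Fintype ι] in
lemma map_transvection {S : Type*} [CommRing S] (f : R →+* S) (P Q : ι) (c : R) :
    (transvection P Q c).map f = transvection P Q (f c) := by
  ext i j
  simp only [transvection, map_apply, add_apply, one_apply, single_apply]
  split_ifs <;> simp

lemma map_weylElement {S : Type*} [CommRing S] (f : R →+* S) (P Q : ι) :
    (weylElement P Q : Matrix ι ι R).map f = weylElement P Q := by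
  simp only [weylElement, Matrix.map_mul, map_transvection, map_one, map_neg]

lemma diagonal_mul_transvection_mul_diagonal (a b : ι → R) (P Q : ι) (c : R) :
    diagonal a * transvection P Q c * diagonal b =
      diagonal (a * b) + single P Q (a P * c * b Q) := by
  ext i j
  simp only [transvection, mul_add, add_mul, mul_one, add_apply, single_apply, diagonal_apply,
    mul_diagonal, diagonal_mul]
  split_ifs <;> simp_all

lemma transvection_mul_weylElement_mul_diagonal_mul_transvection {P Q : ι} (hPQ : P ≠ Q)
    (d e : ι → R) (x y : R) (hd : d P = x * y * d Q) (hP : e P = y * d Q) (hQ : e Q = x * d Q)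
    (he : ∀ i, i ≠ P → i ≠ Q → e i = d i) :
    transvection Q P x * weylElement P Q * diagonal d * transvection Q P y =
      diagonal e + single P Q (d Q) := by
  ext i j
  rcases eq_or_ne j P with hjP | hjP <;> [skip; rcases eq_or_ne j Q with hjQ | hjQ]
  all_goals
    simp only [weylElement, ← mul_assoc, mul_transvection_apply_same,
      mul_transvection_apply_of_ne, mul_diagonal, ne_eq, hPQ.symm, not_false_eq_true, *]
    simp only [transvection, add_apply, one_apply, single_apply, diagonal_apply]
    grind

end Matrix

lemma tz_add (a b : ℤ) : tz (a + b) = tz a * tz b := by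
  simp [tz, HahnSeries.single_mul_single]

lemma coeO_X_pow (k : ℕ) : coeO (PowerSeries.X ^ k) = tz k := by
  simp [coeO, tz, HahnSeries.ofPowerSeries_X_pow]

section bcov

variable {p q : ℕ}

lemma bcov_apply_left (h : p ≠ q + 1) : bcov p q p = 1 := by simp [bcov, h]

lemma bcov_apply_right (h : p ≠ q + 1) : bcov p q (q + 1) = -1 := by simp [bcov, h.symm]

lemma bcov_apply_of_ne {i : ℕ} (hp : i ≠ p) (hq : i ≠ q + 1) : bcov p q i = 0 := by
  simp [bcov, hp, hq]

end bcov

lemma diagonal_tz_mul_transvection_mul_diagonal_tz {ι : Type*} [Fintype ι] [DecidableEq ι]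
    (lam nu : ι → ℤ) (P Q : ι) (k : ℤ) :
    diagonal (fun i => tz (-lam i)) * transvection P Q (tz k) *
        diagonal (fun i => tz (lam i + nu i)) =
      diagonal (fun i => tz (nu i)) + single P Q (tz (k - lam P + lam Q + nu Q)) := by
  rw [diagonal_mul_transvection_mul_diagonal]
  congr 2
  · ext i
    simp [← tz_add]
  · simp only [← tz_add]
    ring_nf

section RelativePosition

variable {n p q : ℕ} (N : ℕ) (mu : ℕ → ℤ) {P Q : Fin (n + 1)}

lemma diagonal_tz_neg_mul_one_add_single_mul_diagonal_tz (lam : ℕ → ℤ) (hP : (P : ℕ) = p)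
    (hQ : (Q : ℕ) = q + 1) (hpq : p ≠ q + 1) :
    diagonal (fun i : Fin (n + 1) => tz (-(lam i))) *
        (1 + single P Q (tz (lam p - lam (q + 1) - N))) *
        diagonal (fun i : Fin (n + 1) => tz (lam i + mu i - N * bcov p q i)) =
      diagonal (fun i : Fin (n + 1) => tz (mu i - N * bcov p q i)) +
        single P Q (tz (mu (q + 1))) := by
  simp_rw [add_sub_assoc]
  rw [← transvection.eq_1, diagonal_tz_mul_transvection_mul_diagonal_tz, hP, hQ,
    bcov_apply_right hpq, ← hQ]
  congr 3
  ring

lemma transvection_X_pow_weylElement_factorization (hP : (P : ℕ) = p) (hQ : (Q : ℕ) = q + 1)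
    (hpq : p ≠ q + 1) (k : ℕ) (hk : mu p = N + k + mu (q + 1)) :
    (transvection Q P (PowerSeries.X ^ N) * weylElement P Q : Matrix _ _ OO).map coeO *
        diagonal (fun i : Fin (n + 1) => tz (mu i)) *
        (transvection Q P (PowerSeries.X ^ k) : Matrix _ _ OO).map coeO =
      diagonal (fun i : Fin (n + 1) => tz (mu i - N * bcov p q i)) +
        single P Q (tz (mu (q + 1))) := by
  have hPQ : P ≠ Q := fun h => hpq (hP ▸ hQ ▸ congrArg Fin.val h)
  rw [Matrix.map_mul, map_transvection, map_transvection, map_weylElement, coeO_X_pow,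
    coeO_X_pow,
    transvection_mul_weylElement_mul_diagonal_mul_transvection hPQ
      (e := fun i => tz (mu i - N * bcov p q i))]
  · rw [hQ]
  · rw [hP, hQ, ← tz_add, ← tz_add, hk]
  · rw [hP, hQ, ← tz_add, bcov_apply_left hpq]
    congr 1
    omega
  · rw [hQ, ← tz_add, bcov_apply_right hpq]
    congr 1
    ring
  · intro i hiP hiQ
    rw [bcov_apply_of_ne (fun h => hiP (Fin.ext (h.trans hP.symm)))
      (fun h => hiQ (Fin.ext (h.trans hQ.symm))), mul_zero, sub_zero]

end RelativePosition

/-- with `x₀ = I + t^{λ_p − λ_{q+1} − N} E_{p,q+1}`, there exist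
`g, h ∈ GL_{n+1}(𝒪)` with `t^{−λ} x₀ t^{λ+μ−Nβ∨} = g t^{μ} h` over `K`.
(Indices are `0`-based: rows and columns run through `0,…,n`, and `0 ≤ p ≤ q ≤ n−1`.) -/
theorem stmt0 (n : ℕ) (N : ℕ)
    (p q : ℕ) (hpq : p ≤ q) (hq : q < n)
    (lam mu : ℕ → ℤ)
    (hmuN : (N : ℤ) ≤ mu p - mu (q + 1)) :
    ∃ g h : Matrix (Fin (n+1)) (Fin (n+1)) OO,
      IsUnit g.det ∧ IsUnit h.det ∧
      Matrix.diagonal (fun i : Fin (n+1) => tz (-(lam i))) *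
          (1 + Matrix.single (⟨p, by omega⟩ : Fin (n+1)) (⟨q + 1, by omega⟩ : Fin (n+1))
              (tz (lam p - lam (q + 1) - N))) *
          Matrix.diagonal (fun i : Fin (n+1) => tz (lam i + mu i - N * bcov p q i)) =
        g.map coeO * Matrix.diagonal (fun i : Fin (n+1) => tz (mu i)) * h.map coeO := by
  have hpq1 : p ≠ q + 1 := by omega
  let P : Fin (n + 1) := ⟨p, by omega⟩
  let Q : Fin (n + 1) := ⟨q + 1, by omega⟩
  have hPQ : P ≠ Q := by simpa [P, Q, Fin.ext_iff] using hpq1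
  obtain ⟨k, hk⟩ : ∃ k : ℕ, mu p = N + k + mu (q + 1) :=
    ⟨(mu p - mu (q + 1) - N).toNat, by omega⟩
  refine ⟨transvection Q P (PowerSeries.X ^ N) * weylElement P Q,
    transvection Q P (PowerSeries.X ^ k), ?_, ?_, ?_⟩
  · simp [det_weylElement hPQ, det_transvection_of_ne _ _ hPQ.symm]
  · simp [det_transvection_of_ne _ _ hPQ.symm]
  rw [diagonal_tz_neg_mul_one_add_single_mul_diagonal_tz N mu lam rfl rfl hpq1,
    transvection_X_pow_weylElement_factorization N mu rfl rfl hpq1 k hk]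
end
end

section
/- There exist matrices g, h ∈ GL_{n+1}(𝒪) such that, as matrices over K, t^{−λ} · x · t^{ν*} = g · t^{μ} · h. (This is the content of the assertion that the point ξ = ([λ], x[λ+μ−Nβ∨], [0]) belongs to the cyclic convolution variety Gr_{c(λ,μ,ν)} with ν = −w₀ν*: the relative position of [λ] and x[ν*] equals μ.) -/
open Matrix

noncomputable section

/-- The matrix `x = I + Σ_{j=p+1}^{q+1} t^{λ_p − λ_j − N} E_{p,j}` (indices `0`-based). -/
def xMat (n N p q : ℕ) (lam : ℕ → ℤ) : Matrix (Fin (n+1)) (Fin (n+1)) KK :=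
  Matrix.of fun i j =>
    if i = j then 1
    else if (i : ℕ) = p ∧ p < (j : ℕ) ∧ (j : ℕ) ≤ q + 1 then tz (lam p - lam j - N)
    else 0

/-!
Conjugation by `t^λ` turns `x` into `1 + t^{-N} Σ_{p<j≤q+1} E_{p,j}`, so the left side is
`(1 + t^{-N} Σ_{p<j≤q+1} E_{p,j}) · t^{μ - Nβ∨}` and `λ` drops out. Its row `p` has the entries
`t^{μ_j - N}` (`p ≤ j ≤ q`) and `t^{μ_{q+1}}` (column `q+1`); by condition (2) on `μ` and dominance
every `t^{μ_j - N - μ_{q+1}}` is integral, so column operations with column `q+1` (a unipotent `h`)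
clear row `p` except there. What is left is `g · t^μ`, where `g` is the signed transposition of
`p` and `q+1` times a unipotent matrix.
-/

namespace Matrix

section Ring

variable {ι R S : Type*} [Ring R] [Ring S]

lemma map_vecMulVec (f : R →+* S) (u v : ι → R) :
    (vecMulVec u v).map f = vecMulVec (f ∘ u) (f ∘ v) := by
  ext i j
  simp [vecMulVec_apply]

variable [DecidableEq ι] {a b : ι}

def signedSwap (a b : ι) : Matrix ι ι R :=
  (diagonal fun i => if i = a then -1 else 1).submatrix (Equiv.swap a b) id

lemma signedSwap_apply_left (hab : a ≠ b) :
    (signedSwap a b : Matrix ι ι R) a = Pi.single b 1 := by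
  ext j
  rw [signedSwap, submatrix_apply, Equiv.swap_apply_left, diagonal_apply, if_neg hab.symm]
  simp [Pi.single_apply, eq_comm]

lemma signedSwap_apply_right : (signedSwap a b : Matrix ι ι R) b = -Pi.single a 1 := by
  ext j
  rw [signedSwap, submatrix_apply, Equiv.swap_apply_right, diagonal_apply]
  by_cases h : a = j <;> simp [eq_comm, h]

lemma signedSwap_apply_of_ne {i : ι} (ha : i ≠ a) (hb : i ≠ b) :
    (signedSwap a b : Matrix ι ι R) i = Pi.single i 1 := by
  ext j
  rw [signedSwap, submatrix_apply, Equiv.swap_apply_of_ne_of_ne ha hb, diagonal_apply, if_neg ha]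
  simp [Pi.single_apply, eq_comm]

lemma signedSwap_map (f : R →+* S) : (signedSwap a b : Matrix ι ι R).map f = signedSwap a b := by
  ext i j
  simp [signedSwap, diagonal_apply, apply_ite f]

variable [Fintype ι]

lemma signedSwap_mulVec_single (hab : a ≠ b) :
    (signedSwap a b : Matrix ι ι R) *ᵥ Pi.single a 1 = -Pi.single b 1 := by
  ext i
  rw [mulVec_single_one, col_apply]
  by_cases hia : i = a
  · subst hia; simp [signedSwap_apply_left hab, hab]
  by_cases hib : i = b
  · subst hib; simp [signedSwap_apply_right]
  · simp [signedSwap_apply_of_ne hia hib, Pi.single_eq_of_ne (Ne.symm hia), hib]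

lemma signedSwap_mul_one_add_vecMulVec_single (hab : a ≠ b) (v : ι → R) :
    signedSwap a b * (1 + vecMulVec (Pi.single a 1) v) =
      signedSwap a b - vecMulVec (Pi.single b 1) v := by
  rw [Matrix.mul_add, Matrix.mul_one, mul_vecMulVec, signedSwap_mulVec_single hab, neg_vecMulVec,
    sub_eq_add_neg]

lemma mul_one_add_vecMulVec_single_apply (A : Matrix ι ι R) (v : ι → R) (i j : ι) :
    (A * (1 + vecMulVec (Pi.single b 1) v)) i j = A i j + A i b * v j := by
  simp [Matrix.mul_add, mul_vecMulVec, vecMulVec_apply]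

end Ring

variable {ι R : Type*} [Fintype ι] [DecidableEq ι] [CommRing R] {a b : ι}

lemma det_signedSwap (hab : a ≠ b) :
    (signedSwap a b : Matrix ι ι R).det = 1 := by
  simp [signedSwap, det_permute, Equiv.Perm.sign_swap hab]

lemma det_one_add_vecMulVec_single {v : ι → R} (hv : v b = 0) :
    (1 + vecMulVec (Pi.single b 1) v).det = 1 := by
  rw [vecMulVec_eq Unit, det_one_add_replicateCol_mul_replicateRow, dotProduct_single_one, hv,
    add_zero]

end Matrix

open PowerSeries

lemma tz_mul (a b : ℤ) : tz a * tz b = tz (a + b) := by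
  simp [tz, HahnSeries.single_mul_single]

lemma coeO_X_pow_toNat {k : ℤ} (hk : 0 ≤ k) : coeO (X ^ k.toNat) = tz k := by
  simp [coeO, tz, HahnSeries.ofPowerSeries_X_pow, hk]

section

variable {ι : Type*} [Fintype ι] [DecidableEq ι] {a b : ι} {S : Finset ι}

theorem one_add_vecMulVec_mul_diagonal_tz_eq (hab : a ≠ b) (haS : a ∉ S) (hbS : b ∉ S)
    (μ : ι → ℤ) (N : ℕ) :
    (1 + vecMulVec (Pi.single a (tz (-N))) (fun j => if j ∈ insert b S then 1 else 0)) *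
        diagonal (fun i => tz (μ i - N * (Pi.single a 1 - Pi.single b 1 : ι → ℤ) i)) =
      (signedSwap a b -
          vecMulVec (Pi.single b 1) (fun j => (if j ∈ S then 1 else 0) - Pi.single b (tz N) j)) *
        diagonal (fun i => tz (μ i)) *
        (1 + vecMulVec (Pi.single b 1)
          (fun j => if j ∈ insert a S then tz (μ j - N - μ b) else 0)) := by
  refine Matrix.ext fun i l => ?_
  rw [mul_one_add_vecMulVec_single_apply, mul_diagonal, mul_diagonal, mul_diagonal]
  simp only [Matrix.sub_apply, Matrix.add_apply, vecMulVec_apply, one_apply, Pi.single_apply,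
    Pi.sub_apply]
  by_cases hia : i = a
  · subst i
    simp only [signedSwap_apply_left hab, Pi.single_apply, if_neg hab]
    by_cases hla : l = a
    · subst l; simp [hab, haS, hbS, tz_mul]
    by_cases hlb : l = b
    · subst l; simp [hab, hab.symm, hbS, tz_mul]
    by_cases hlS : l ∈ S
    · simp [hbS, hla, hlb, hlS, Ne.symm hla, tz_mul]; ring_nf
    · simp [hbS, hla, hlb, hlS, Ne.symm hla]
  by_cases hib : i = b
  · subst i
    simp only [signedSwap_apply_right, Pi.neg_apply, Pi.single_apply]
    by_cases hla : l = a
    · subst l; simp [hab, hab.symm, haS, hbS, tz_mul]; ring_nf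
    by_cases hlb : l = b
    · subst l; simp [hab.symm, hbS, tz_mul, add_comm]
    by_cases hlS : l ∈ S
    · simp [hab.symm, hbS, hla, hlb, hlS, Ne.symm hlb, tz_mul]; ring_nf
    · simp [hab.symm, hbS, hla, hlb, hlS, Ne.symm hlb]
  · simp only [signedSwap_apply_of_ne hia hib]
    by_cases hil : i = l
    · subst l; simp [hia, hib]
    · simp [hil, Ne.symm hil, hia, hib]

theorem exists_isUnit_det_one_add_vecMulVec_mul_diagonal_tz_eq (hab : a ≠ b) (haS : a ∉ S)
    (hbS : b ∉ S) (μ : ι → ℤ) (N : ℕ) (hμ : ∀ j ∈ insert a S, μ b + N ≤ μ j) :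
    ∃ g h : Matrix ι ι OO, IsUnit g.det ∧ IsUnit h.det ∧
      (1 + vecMulVec (Pi.single a (tz (-N))) (fun j => if j ∈ insert b S then 1 else 0)) *
          diagonal (fun i => tz (μ i - N * (Pi.single a 1 - Pi.single b 1 : ι → ℤ) i)) =
        g.map coeO * diagonal (fun i => tz (μ i)) * h.map coeO := by
  set w : ι → OO := fun j => (if j ∈ S then 1 else 0) - (Pi.single b (X ^ N) : ι → OO) j with hw
  set c : ι → OO := fun j => if j ∈ insert a S then X ^ (μ j - N - μ b).toNat else 0 with hc
  have hwa : w a = 0 := by simp [hw, haS, hab]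
  have hcb : c b = 0 := by simp [hc, hab.symm, hbS]
  refine ⟨signedSwap a b * (1 + vecMulVec (Pi.single a 1) w), 1 + vecMulVec (Pi.single b 1) c,
    ?_, ?_, ?_⟩
  · rw [det_mul, det_signedSwap hab, det_one_add_vecMulVec_single hwa, mul_one]
    exact isUnit_one
  · rw [det_one_add_vecMulVec_single hcb]
    exact isUnit_one
  have hsingle : ∀ i : ι, coeO ∘ Pi.single i 1 = Pi.single i 1 := fun i => by
    funext j; by_cases hj : j = i <;> simp [hj]
  have hwK : coeO ∘ w = fun j => (if j ∈ S then 1 else 0) - Pi.single b (tz N) j := by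
    funext j
    by_cases hj : j = b
    · simp [hw, hj, hbS, ← coeO_X_pow_toNat (Int.natCast_nonneg N)]
    · simp [hw, hj, apply_ite coeO]
  have hcK : coeO ∘ c = fun j => if j ∈ insert a S then tz (μ j - N - μ b) else 0 := by
    funext j
    by_cases hj : j ∈ insert a S
    · simp only [Function.comp_apply, hc, if_pos hj]
      exact coeO_X_pow_toNat (by linarith [hμ j hj])
    · simp only [Function.comp_apply, hc, if_neg hj, map_zero]
  rw [one_add_vecMulVec_mul_diagonal_tz_eq hab haS hbS, signedSwap_mul_one_add_vecMulVec_single hab,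
    Matrix.map_sub _ (map_sub coeO), Matrix.map_add _ (map_add coeO),
    Matrix.map_one _ (map_zero coeO) (map_one coeO), signedSwap_map, map_vecMulVec, map_vecMulVec,
    hsingle, hwK, hcK]

end

lemma diagonal_tz_mul_xMat_mul_diagonal_tz {n N p q : ℕ} (lam ν : ℕ → ℤ) {P : Fin (n + 1)}
    (hP : (P : ℕ) = p) :
    diagonal (fun i : Fin (n + 1) => tz (-(lam i))) * xMat n N p q lam *
        diagonal (fun i : Fin (n + 1) => tz (ν i)) =
      (1 + vecMulVec (Pi.single P (tz (-N)))
          (fun j : Fin (n + 1) => if p < (j : ℕ) ∧ (j : ℕ) ≤ q + 1 then 1 else 0)) *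
        diagonal (fun i : Fin (n + 1) => tz (ν i - lam i)) := by
  have hiP : ∀ i : Fin (n + 1), (i : ℕ) = p ↔ i = P := fun i => by rw [Fin.ext_iff, hP]
  refine Matrix.ext fun i j => ?_
  rw [mul_diagonal, diagonal_mul, mul_diagonal]
  by_cases hi : i = P
  · subst i
    by_cases hj : p < (j : ℕ) ∧ (j : ℕ) ≤ q + 1
    · have hPj : P ≠ j := by rintro rfl; omega
      simp [xMat, vecMulVec_apply, hP, hj, hPj, tz_mul]; ring_nf
    · by_cases hPj : P = j
      · subst j; simp [xMat, vecMulVec_apply, hj, tz_mul]; ring_nf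
      · simp [xMat, vecMulVec_apply, hj, hPj]
  · by_cases hij : i = j
    · subst j; simp [xMat, vecMulVec_apply, hi, tz_mul]; ring_nf
    · simp [xMat, vecMulVec_apply, hiP, hi, hij]

theorem stmt1_general (n : ℕ) (N : ℕ)
    (p q : ℕ) (hpq : p ≤ q) (hq : q < n)
    (lam mu : ℕ → ℤ)
    (hmu : ∀ i j : ℕ, i ≤ j → j ≤ n → mu j ≤ mu i)
    (nus : ℕ → ℤ) (hnus : ∀ i, nus i = lam i + mu i - N * bcov p q i)
    (h2c : (N : ℤ) ≤ mu p - mu (p + 1)) (h2d : (N : ℤ) ≤ mu q - mu (q + 1)) :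
    ∃ g h : Matrix (Fin (n+1)) (Fin (n+1)) OO,
      IsUnit g.det ∧ IsUnit h.det ∧
      Matrix.diagonal (fun i : Fin (n+1) => tz (-(lam i))) * xMat n N p q lam *
          Matrix.diagonal (fun i : Fin (n+1) => tz (nus i)) =
        g.map coeO * Matrix.diagonal (fun i : Fin (n+1) => tz (mu i)) * h.map coeO := by
  set P : Fin (n + 1) := ⟨p, by omega⟩
  set Q : Fin (n + 1) := ⟨q + 1, by omega⟩
  set S := Finset.univ.filter fun j : Fin (n + 1) => p < (j : ℕ) ∧ (j : ℕ) ≤ q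
  have hPQ : P ≠ Q := by simp [P, Q, Fin.ext_iff]; omega
  have hPS : P ∉ S := by simp [P, S]
  have hQS : Q ∉ S := by simp [Q, S]
  have hrow : (fun j : Fin (n + 1) => if p < (j : ℕ) ∧ (j : ℕ) ≤ q + 1 then (1 : KK) else 0) =
      fun j => if j ∈ insert Q S then 1 else 0 := by
    funext j; congr 1; simp [Q, S, Fin.ext_iff]; omega
  have hν : (fun i : Fin (n + 1) => tz (nus i - lam i)) =
      fun i : Fin (n + 1) =>
        tz (mu i - N * (Pi.single P 1 - Pi.single Q 1 : Fin (n + 1) → ℤ) i) := by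
    funext i; rw [hnus]; congr 1; simp [bcov, P, Q, Pi.single_apply, Fin.ext_iff]; ring
  have hμ : ∀ j ∈ insert P S, mu Q + N ≤ mu j := by
    simp only [Finset.mem_insert, Finset.mem_filter, Finset.mem_univ, true_and, S]
    rintro j (rfl | ⟨hpj, hjq⟩)
    · linarith [hmu (p + 1) (q + 1) (by omega) (by omega)]
    · linarith [hmu j q hjq (by omega)]
  obtain ⟨g, h, hg, hh, hgh⟩ :=
    exists_isUnit_det_one_add_vecMulVec_mul_diagonal_tz_eq hPQ hPS hQS (fun i => mu i) N hμ
  refine ⟨g, h, hg, hh, ?_⟩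
  rw [diagonal_tz_mul_xMat_mul_diagonal_tz (p := p) lam nus (P := P) rfl, hrow, hν, hgh]

/-- there exist `g, h ∈ GL_{n+1}(𝒪)` with `t^{−λ} · x · t^{ν*} = g · t^{μ} · h`
over `K`, where `ν* = λ + μ − Nβ∨`.  (Indices are `0`-based: rows and columns run through
`0,…,n`, and `0 ≤ p ≤ q ≤ n−1`.) -/
theorem stmt1 (n : ℕ) (hn : 1 ≤ n) (N : ℕ) (hN : 1 ≤ N)
    (p q : ℕ) (hpq : p ≤ q) (hq : q < n)
    (lam mu : ℕ → ℤ)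
    (hlam : ∀ i j : ℕ, i ≤ j → j ≤ n → lam j ≤ lam i)
    (hmu : ∀ i j : ℕ, i ≤ j → j ≤ n → mu j ≤ mu i)
    (nus : ℕ → ℤ) (hnus : ∀ i, nus i = lam i + mu i - N * bcov p q i)
    (hnusdom : ∀ i j : ℕ, i ≤ j → j ≤ n → nus j ≤ nus i)
    (h2a : (N : ℤ) ≤ lam p - lam (p + 1)) (h2b : (N : ℤ) ≤ lam q - lam (q + 1))
    (h2c : (N : ℤ) ≤ mu p - mu (p + 1)) (h2d : (N : ℤ) ≤ mu q - mu (q + 1)) :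
    ∃ g h : Matrix (Fin (n+1)) (Fin (n+1)) OO,
      IsUnit g.det ∧ IsUnit h.det ∧
      Matrix.diagonal (fun i : Fin (n+1) => tz (-(lam i))) * xMat n N p q lam *
          Matrix.diagonal (fun i : Fin (n+1) => tz (nus i)) =
        g.map coeO * Matrix.diagonal (fun i : Fin (n+1) => tz (mu i)) * h.map coeO :=
  stmt1_general n N p q hpq hq lam mu hmu nus hnus h2c h2d
end
end

section
/- Let v be any matrix with entries in 𝒪 such that v_{i,j} ∈ t^{λ_i − λ_j}𝒪 for all 1 ≤ i < j ≤ n+1, and set u = x⁻¹ v x. Then for all 1 ≤ i < j ≤ n+1: if i = p, or if i < p and p < j ≤ q+1, then u_{i,j} ∈ t^{λ_i − λ_j − N}𝒪; in all other cases u_{i,j} ∈ t^{λ_i − λ_j}𝒪. (These are the minimal-valuation bounds of List 4.2, cases (B)–(E).) -/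
open Matrix

noncomputable section

/-- `f` belongs to the `𝒪`-lattice `t^k 𝒪 ⊆ K`. -/
def memT (k : ℤ) (f : KK) : Prop := ∃ w : OO, f = tz k * coeO w

lemma tz_natCast (m : ℕ) : tz m = coeO (PowerSeries.X ^ m) := by
  simp [tz, coeO, HahnSeries.ofPowerSeries_X_pow]

lemma memT_tz (k : ℤ) : memT k (tz k) := ⟨1, by simp⟩

lemma memT_zero (k : ℤ) : memT k 0 := ⟨0, by simp⟩

lemma memT.mono {k k' : ℤ} {f : KK} (hf : memT k f) (h : k' ≤ k) : memT k' f := by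
  obtain ⟨w, rfl⟩ := hf
  refine ⟨PowerSeries.X ^ (k - k').toNat * w, ?_⟩
  rw [map_mul, ← tz_natCast, ← mul_assoc, ← tz_add, Int.toNat_of_nonneg (by omega)]
  congr 2
  ring

lemma memT.add {k : ℤ} {f g : KK} (hf : memT k f) (hg : memT k g) : memT k (f + g) := by
  obtain ⟨w, rfl⟩ := hf
  obtain ⟨w', rfl⟩ := hg
  exact ⟨w + w', by rw [map_add, mul_add]⟩

lemma memT.sub {k : ℤ} {f g : KK} (hf : memT k f) (hg : memT k g) : memT k (f - g) := by
  obtain ⟨w, rfl⟩ := hf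
  obtain ⟨w', rfl⟩ := hg
  exact ⟨w - w', by rw [map_sub, mul_sub]⟩

lemma memT.mul {k m : ℤ} {f g : KK} (hf : memT k f) (hg : memT m g) :
    memT (k + m) (f * g) := by
  obtain ⟨w, rfl⟩ := hf
  obtain ⟨w', rfl⟩ := hg
  exact ⟨w * w', by rw [map_mul, tz_add]; ring⟩

lemma memT_sum {k : ℤ} {α : Type*} {s : Finset α} {f : α → KK}
    (h : ∀ a ∈ s, memT k (f a)) : memT k (∑ a ∈ s, f a) :=
  Finset.sum_induction f (memT k) (fun _ _ hf hg => hf.add hg) (memT_zero k) h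

section xMat

variable {n N p q : ℕ} {lam : ℕ → ℤ}

def xNil (n N p q : ℕ) (lam : ℕ → ℤ) : Matrix (Fin (n+1)) (Fin (n+1)) KK :=
  Matrix.of fun i j =>
    if (i : ℕ) = p ∧ p < (j : ℕ) ∧ (j : ℕ) ≤ q + 1 then tz (lam p - lam j - N) else 0

lemma xMat_eq_one_add_xNil : xMat n N p q lam = 1 + xNil n N p q lam := by
  refine Matrix.ext fun i j => ?_
  by_cases h : i = j
  · subst h
    have : ¬ ((i : ℕ) = p ∧ p < i ∧ (i : ℕ) ≤ q + 1) := by omega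
    simp [xMat, xNil, this]
  · simp [xMat, xNil, h, one_apply_ne h]

lemma xNil_mul_self : xNil n N p q lam * xNil n N p q lam = 0 := by
  refine Matrix.ext fun i j => ?_
  simp only [mul_apply, Matrix.zero_apply, xNil, of_apply]
  refine Finset.sum_eq_zero fun a _ => ?_
  split_ifs <;> first | omega | simp

lemma inv_xMat : (xMat n N p q lam)⁻¹ = 1 - xNil n N p q lam := by
  refine inv_eq_right_inv ?_
  calc xMat n N p q lam * (1 - xNil n N p q lam)
      = 1 - xNil n N p q lam * xNil n N p q lam := by
        rw [xMat_eq_one_add_xNil, add_mul, one_mul, mul_sub, mul_one]; abel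
    _ = 1 := by rw [xNil_mul_self, sub_zero]

lemma memT_mul_xNil_apply {k : ℤ} {c : KK} {a b : Fin (n+1)}
    (h : (a : ℕ) = p → p < (b : ℕ) → (b : ℕ) ≤ q + 1 → memT (k - (lam p - lam b - N)) c) :
    memT k (c * xNil n N p q lam a b) := by
  simp only [xNil, of_apply]
  split_ifs with hab
  · exact ((h hab.1 hab.2.1 hab.2.2).mul (memT_tz _)).mono (by omega)
  · simpa using memT_zero k

lemma memT_xNil_apply_mul {k : ℤ} {c : KK} {a b : Fin (n+1)}
    (h : (a : ℕ) = p → p < (b : ℕ) → (b : ℕ) ≤ q + 1 → memT (k - (lam p - lam b - N)) c) :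
    memT k (xNil n N p q lam a b * c) := by
  rw [mul_comm]
  exact memT_mul_xNil_apply h

end xMat

section conj

variable {n N p q : ℕ} {lam : ℕ → ℤ}

def conjExponent (N p q : ℕ) (lam : ℕ → ℤ) (i j : ℕ) : ℤ :=
  lam i - lam j - if i = p ∨ (i < p ∧ p < j ∧ j ≤ q + 1) then (N : ℤ) else 0

lemma memT_max_of_upper_bounds {v : Matrix (Fin (n+1)) (Fin (n+1)) KK}
    (hlam : ∀ i j : ℕ, i ≤ j → j ≤ n → lam j ≤ lam i)
    (hvO : ∀ i j : Fin (n+1), memT 0 (v i j))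
    (hvlam : ∀ i j : Fin (n+1), i < j → memT (lam i - lam j) (v i j)) (a b : Fin (n+1)) :
    memT (max 0 (lam a - lam b)) (v a b) := by
  rcases lt_or_ge a b with hab | hab
  · have := hlam a b hab.le (by omega)
    rw [max_eq_right (by omega)]
    exact hvlam a b hab
  · have := hlam b a hab (by omega)
    rw [max_eq_left (by omega)]
    exact hvO a b

lemma memT_conj_xMat_apply {v : Matrix (Fin (n+1)) (Fin (n+1)) KK}
    (hlam : ∀ i j : ℕ, i ≤ j → j ≤ n → lam j ≤ lam i)
    (h2a : (N : ℤ) ≤ lam p - lam (p + 1))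
    (hvO : ∀ i j : Fin (n+1), memT 0 (v i j))
    (hvlam : ∀ i j : Fin (n+1), i < j → memT (lam i - lam j) (v i j))
    {i j : Fin (n+1)} (hij : i < j) :
    memT (conjExponent N p q lam i j) (((xMat n N p q lam)⁻¹ * v * xMat n N p q lam) i j) := by
  have hv := memT_max_of_upper_bounds hlam hvO hvlam
  have hgap (a : Fin (n+1)) (ha : p < (a : ℕ)) : lam a ≤ lam p - N := by
    have := hlam (p + 1) a ha (by omega)
    omega
  set E := xNil n N p q lam
  have expand : (1 - E) * v * (1 + E) = v + v * E - E * v - E * v * E := by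
    simp only [sub_mul, mul_add, one_mul, mul_one]; abel
  rw [inv_xMat, xMat_eq_one_add_xNil, expand]
  simp only [Matrix.add_apply, Matrix.sub_apply, mul_apply]
  unfold conjExponent
  refine ((memT.add ?_ ?_).sub ?_).sub ?_
  · exact (hvlam i j hij).mono (by split_ifs <;> omega)
  · refine memT_sum fun b _ => memT_mul_xNil_apply fun hb hpj hjq => (hv i b).mono ?_
    rw [hb]
    rcases le_or_gt (i : ℕ) p with hip | hip
    · split_ifs <;> omega
    · have := hgap i hip
      split_ifs <;> omega
  · refine memT_sum fun a _ => memT_xNil_apply_mul fun hi hpa _ => (hv a j).mono ?_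
    rw [hi]
    split_ifs <;> omega
  · refine memT_sum fun b _ => memT_mul_xNil_apply fun hb _ _ =>
      memT_sum fun a _ => memT_xNil_apply_mul fun hi hpa _ => (hv a b).mono ?_
    have := hgap a hpa
    rw [hi, hb]
    split_ifs <;> omega

end conj

theorem stmt5_general (n : ℕ) (N : ℕ)
    (p q : ℕ)
    (lam : ℕ → ℤ)
    (hlam : ∀ i j : ℕ, i ≤ j → j ≤ n → lam j ≤ lam i)
    (h2a : (N : ℤ) ≤ lam p - lam (p + 1))
    (v : Matrix (Fin (n+1)) (Fin (n+1)) KK)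
    (hvO : ∀ i j : Fin (n+1), memT 0 (v i j))
    (hvlam : ∀ i j : Fin (n+1), i < j → memT (lam i - lam j) (v i j)) :
    ∀ i j : Fin (n+1), i < j →
      (((i : ℕ) = p ∨ ((i : ℕ) < p ∧ p < (j : ℕ) ∧ (j : ℕ) ≤ q + 1)) →
        memT (lam i - lam j - N) (((xMat n N p q lam)⁻¹ * v * xMat n N p q lam) i j)) ∧
      (¬ ((i : ℕ) = p ∨ ((i : ℕ) < p ∧ p < (j : ℕ) ∧ (j : ℕ) ≤ q + 1)) →
        memT (lam i - lam j) (((xMat n N p q lam)⁻¹ * v * xMat n N p q lam) i j)) := by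
  intro i j hij
  have hu := memT_conj_xMat_apply (q := q) hlam h2a hvO hvlam hij
  constructor <;> intro h <;> simpa [conjExponent, h] using hu

/-- the minimal-valuation bounds for `u = x⁻¹ v x` (List 4.2, cases (B)–(E)).
For `i < j`: if `i = p`, or if `i < p` and `p < j ≤ q+1`, then `u_{i,j} ∈ t^{λ_i−λ_j−N}𝒪`;
in all other cases `u_{i,j} ∈ t^{λ_i−λ_j}𝒪`.
(Indices are `0`-based: rows and columns run through `0,…,n`, and `0 ≤ p ≤ q ≤ n−1`.) -/
theorem stmt5 (n : ℕ) (hn : 1 ≤ n) (N : ℕ) (hN : 1 ≤ N)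
    (p q : ℕ) (hpq : p ≤ q) (hq : q < n)
    (lam : ℕ → ℤ)
    (hlam : ∀ i j : ℕ, i ≤ j → j ≤ n → lam j ≤ lam i)
    (h2a : (N : ℤ) ≤ lam p - lam (p + 1)) (h2b : (N : ℤ) ≤ lam q - lam (q + 1))
    (v : Matrix (Fin (n+1)) (Fin (n+1)) KK)
    (hvO : ∀ i j : Fin (n+1), memT 0 (v i j))
    (hvlam : ∀ i j : Fin (n+1), i < j → memT (lam i - lam j) (v i j)) :
    ∀ i j : Fin (n+1), i < j →
      (((i : ℕ) = p ∨ ((i : ℕ) < p ∧ p < (j : ℕ) ∧ (j : ℕ) ≤ q + 1)) →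
        memT (lam i - lam j - N) (((xMat n N p q lam)⁻¹ * v * xMat n N p q lam) i j)) ∧
      (¬ ((i : ℕ) = p ∨ ((i : ℕ) < p ∧ p < (j : ℕ) ∧ (j : ℕ) ≤ q + 1)) →
        memT (lam i - lam j) (((xMat n N p q lam)⁻¹ * v * xMat n N p q lam) i j)) :=
  stmt5_general n N p q lam hlam h2a v hvO hvlam
end
end

section
/- For every a ∈ ℂ with a ≠ 0 and a ≠ 1, there exist matrices g, h ∈ GL_3(𝒪) such that, as matrices over K, t^{−λ} · u(a) · t^{λ} = g · t^{λ} · h. (This says the relative position of the lattices [λ] and u(a)[λ] equals λ = 2ρ∨, so that the triple ξ(a) = ([2ρ∨], u(a)[2ρ∨], [0]) lies in the cyclic convolution variety Gr_{c(2ρ∨,2ρ∨,2ρ∨)} for PGL_3.) -/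
open Matrix

noncomputable section

/-- The unipotent matrix `u(a)` with rows `(1, t, a t²)`, `(0, 1, t)`, `(0, 0, 1)`. -/
def uMat (a : ℂ) : Matrix (Fin 3) (Fin 3) KK :=
  !![1, tz 1, HahnSeries.single 2 a; 0, 1, tz 1; 0, 0, 1]

/-!
After conjugation by `t^λ`, `u(a)` becomes the unipotent matrix with entries `t⁻¹, a t⁻², t⁻¹`
above the diagonal. Its Cartan decomposition has explicit factors `g`, `h` whose entries are
polynomials in `t` with coefficients in `ℂ[a⁻¹, (1 - a)⁻¹]`; their determinants are the
constants `(a (1 - a))^{∓1}`, which are units precisely because `a ≠ 0, 1`. The equality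
`t^{-λ} u(a) t^λ = g t^λ h` is then an identity of rational functions in `t`, valid in any field.
-/

section CartanFactors

variable {k R : Type*} [Field k] [CommRing R] [Algebra k R]

def cartanFactorLeft (a : k) (t : R) : Matrix (Fin 3) (Fin 3) R :=
  !![0, 0, 1;
     0, -algebraMap k R a⁻¹, algebraMap k R a⁻¹ * t;
     algebraMap k R (1 - a)⁻¹, -algebraMap k R (a * (1 - a))⁻¹ * t, algebraMap k R a⁻¹ * t ^ 2]

def cartanFactorRight (a : k) (t : R) : Matrix (Fin 3) (Fin 3) R :=
  !![1, 0, 0;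
     t, algebraMap k R (1 - a), 0;
     t ^ 2, t, algebraMap k R a]

theorem det_cartanFactorLeft (a : k) (t : R) :
    (cartanFactorLeft a t).det = algebraMap k R (a * (1 - a))⁻¹ := by
  simp [cartanFactorLeft, det_fin_three, mul_comm]

theorem det_cartanFactorRight (a : k) (t : R) :
    (cartanFactorRight a t).det = algebraMap k R (a * (1 - a)) := by
  simp [cartanFactorRight, det_fin_three, mul_comm]

theorem isUnit_det_cartanFactorLeft {a : k} (ha0 : a ≠ 0) (ha1 : a ≠ 1) (t : R) :
    IsUnit (cartanFactorLeft a t).det := by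
  rw [det_cartanFactorLeft]
  exact (isUnit_iff_ne_zero.mpr (inv_ne_zero (mul_ne_zero ha0 (sub_ne_zero.mpr ha1.symm)))).map _

theorem isUnit_det_cartanFactorRight {a : k} (ha0 : a ≠ 0) (ha1 : a ≠ 1) (t : R) :
    IsUnit (cartanFactorRight a t).det := by
  rw [det_cartanFactorRight]
  exact (isUnit_iff_ne_zero.mpr (mul_ne_zero ha0 (sub_ne_zero.mpr ha1.symm))).map _

variable {S : Type*} [CommRing S] [Algebra k S] (φ : R →+* S)

theorem map_cartanFactorLeft (hφ : ∀ c, φ (algebraMap k R c) = algebraMap k S c) (a : k) (t : R) :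
    (cartanFactorLeft a t).map φ = cartanFactorLeft a (φ t) := by
  ext i j; fin_cases i <;> fin_cases j <;> simp [cartanFactorLeft, hφ]

theorem map_cartanFactorRight (hφ : ∀ c, φ (algebraMap k R c) = algebraMap k S c) (a : k) (t : R) :
    (cartanFactorRight a t).map φ = cartanFactorRight a (φ t) := by
  ext i j; fin_cases i <;> fin_cases j <;> simp [cartanFactorRight, hφ]

end CartanFactors

theorem cartan_decomposition_conj_unipotent {k F : Type*} [Field k] [Field F] [Algebra k F]
    {a : k} (ha0 : a ≠ 0) (ha1 : a ≠ 1) {t : F} (ht : t ≠ 0) :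
    diagonal ![t ^ (-2 : ℤ), t ^ (0 : ℤ), t ^ (2 : ℤ)] *
        !![1, t, algebraMap k F a * t ^ 2; 0, 1, t; 0, 0, 1] *
        diagonal ![t ^ (2 : ℤ), t ^ (0 : ℤ), t ^ (-2 : ℤ)] =
      cartanFactorLeft a t * diagonal ![t ^ (2 : ℤ), t ^ (0 : ℤ), t ^ (-2 : ℤ)] *
        cartanFactorRight a t := by
  have hA0 : algebraMap k F a ≠ 0 := (map_ne_zero _).mpr ha0
  have hA1 : 1 - algebraMap k F a ≠ 0 := by
    rw [← map_one (algebraMap k F), ← map_sub]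
    exact (map_ne_zero _).mpr (sub_ne_zero.mpr ha1.symm)
  ext i j
  rw [mul_diagonal, diagonal_mul, mul_apply, Fin.sum_univ_three]
  simp only [mul_diagonal]
  fin_cases i <;> fin_cases j <;> simp [cartanFactorLeft, cartanFactorRight] <;> field_simp <;> ring

theorem tz_eq_zpow (n : ℤ) : tz n = tz 1 ^ n :=
  RatFunc.single_zpow n

theorem tz_one_ne_zero : tz 1 ≠ 0 :=
  HahnSeries.single_ne_zero one_ne_zero

theorem coeO_X : coeO PowerSeries.X = tz 1 :=
  HahnSeries.ofPowerSeries_X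

theorem coeO_algebraMap (c : ℂ) : coeO (algebraMap ℂ OO c) = algebraMap ℂ KK c :=
  rfl

theorem uMat_eq (a : ℂ) :
    uMat a = !![1, tz 1, algebraMap ℂ KK a * tz 1 ^ 2; 0, 1, tz 1; 0, 0, 1] := by
  have hC : algebraMap ℂ KK a = HahnSeries.single 0 a := by
    rw [HahnSeries.algebraMap_apply', PowerSeries.algebraMap_apply, HahnSeries.ofPowerSeries_C]
    simp
  rw [uMat, tz, hC, HahnSeries.single_pow, HahnSeries.single_mul_single]
  norm_num

/-- for `a ≠ 0, 1` there exist `g, h ∈ GL₃(𝒪)` with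
`t^{−λ} · u(a) · t^{λ} = g · t^{λ} · h` over `K`, where `λ = (2, 0, −2)`. -/
theorem stmt11 (a : ℂ) (ha0 : a ≠ 0) (ha1 : a ≠ 1) :
    ∃ g h : Matrix (Fin 3) (Fin 3) OO,
      IsUnit g.det ∧ IsUnit h.det ∧
      Matrix.diagonal ![tz (-2), tz 0, tz 2] * uMat a * Matrix.diagonal ![tz 2, tz 0, tz (-2)] =
        g.map coeO * Matrix.diagonal ![tz 2, tz 0, tz (-2)] * h.map coeO := by
  refine ⟨cartanFactorLeft a PowerSeries.X, cartanFactorRight a PowerSeries.X,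
    isUnit_det_cartanFactorLeft ha0 ha1 _, isUnit_det_cartanFactorRight ha0 ha1 _, ?_⟩
  rw [map_cartanFactorLeft coeO coeO_algebraMap, map_cartanFactorRight coeO coeO_algebraMap,
    coeO_X, uMat_eq, tz_eq_zpow (-2), tz_eq_zpow 0, tz_eq_zpow 2]
  exact cartan_decomposition_conj_unipotent ha0 ha1 tz_one_ne_zero
end
end
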